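/- For a convex symmetric set K ⊆ ℝ^n and t > 0, the combinatorial dimension v(K, t) equals the maximal cardinality of a subset I ⊆ {1,...,n} such that the coordinate projection P_I K contains the cube [-t/2, t/2]^I. -/

import Mathlib

/-!
A shattering witness for `S ⊆ I` and one for `I \ S`, the latter reflected through the origin,
average to a point of `K` that is `≥ t/2` on `S` and `≤ -t/2` on `I \ S`. A convex set meeting
all `2^|I|` of these corner regions projects onto the whole cube: slice `K` by the hyperplane
`x j = c j`, observe that each corner region of the remaining coordinates still meets the slice
(a segment between two corner points crosses the hyperplane), and induct on `|I|`.
Conversely, the vertices of the cube inside `P_I K` shatter `I` with level `h = -t/2`.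
-/

/-- The coordinate projection of `K ⊆ ℝ^n` onto the coordinates in `I`. -/
def projSet {n : ℕ} (K : Set (Fin n → ℝ)) (I : Finset (Fin n)) :
    Set ({i // i ∈ I} → ℝ) :=
  {z | ∃ x ∈ K, ∀ i : {i // i ∈ I}, x i.1 = z i}

/-- `I` is `t`-shattered by `K ⊆ ℝ^n`. -/
def TShattered {n : ℕ} (K : Set (Fin n → ℝ)) (I : Finset (Fin n)) (t : ℝ) : Prop :=
  ∃ h : Fin n → ℝ, ∀ S ⊆ I, ∃ x ∈ K,
    (∀ i ∈ S, h i + t ≤ x i) ∧ (∀ i ∈ I \ S, x i ≤ h i)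

open Set

section CornerRegion

variable {ι : Type*} [DecidableEq ι]

def cornerRegion (I S : Finset ι) (a b : ι → ℝ) : Set (ι → ℝ) :=
  {x | (∀ i ∈ S, b i ≤ x i) ∧ ∀ i ∈ I \ S, x i ≤ a i}

theorem convex_cornerRegion (I S : Finset ι) (a b : ι → ℝ) :
    Convex ℝ (cornerRegion I S a b) := by
  rintro x ⟨hxS, hxI⟩ y ⟨hyS, hyI⟩ μ ν hμ hν hμν
  exact ⟨fun i hi => convex_Ici (b i) (hxS i hi) (hyS i hi) hμ hν hμν,
    fun i hi => convex_Iic (a i) (hxI i hi) (hyI i hi) hμ hν hμν⟩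

theorem cornerRegion_subset_cornerRegion {I I' S S' : Finset ι} {a b : ι → ℝ}
    (hS : S' ⊆ S) (hI : I' \ S' ⊆ I \ S) :
    cornerRegion I S a b ⊆ cornerRegion I' S' a b :=
  fun _ ⟨hxS, hxI⟩ => ⟨fun i hi => hxS i (hS hi), fun i hi => hxI i (hI hi)⟩

omit [DecidableEq ι] in
theorem exists_mem_segment_apply_eq {x y : ι → ℝ} {j : ι} {c : ℝ}
    (hc : c ∈ uIcc (x j) (y j)) : ∃ z ∈ segment ℝ x y, z j = c := by
  rwa [← segment_eq_uIcc, ← Function.eval_apply (x := j) x, ← Function.eval_apply (x := j) y,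
    ← LinearMap.coe_proj (R := ℝ), ← LinearMap.coe_toAffineMap, ← image_segment] at hc

variable {K : Set (ι → ℝ)} {a b c : ι → ℝ}

theorem Convex.nonempty_slice_inter_cornerRegion (hK : Convex ℝ K) {I : Finset ι} {j : ι}
    (hj : j ∉ I) (hKI : ∀ S ⊆ insert j I, (K ∩ cornerRegion (insert j I) S a b).Nonempty)
    (hc : c j ∈ Icc (a j) (b j)) :
    ∀ S ⊆ I, (K ∩ {x | x j = c j} ∩ cornerRegion I S a b).Nonempty := by
  intro S hS
  have hjS : j ∉ S := fun h => hj (hS h)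
  obtain ⟨xp, hxpK, hxp⟩ := hKI (insert j S) (Finset.insert_subset_insert j hS)
  obtain ⟨xm, hxmK, hxm⟩ := hKI S (hS.trans (Finset.subset_insert j I))
  have hxp_corner : xp ∈ cornerRegion I S a b :=
    cornerRegion_subset_cornerRegion (Finset.subset_insert j S)
      (by grind) hxp
  have hxm_corner : xm ∈ cornerRegion I S a b :=
    cornerRegion_subset_cornerRegion subset_rfl
      (Finset.sdiff_subset_sdiff (Finset.subset_insert j I) subset_rfl) hxm
  have hxp_j : b j ≤ xp j := hxp.1 j (Finset.mem_insert_self j S)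
  have hxm_j : xm j ≤ a j := hxm.2 j (by simp [hjS])
  obtain ⟨z, hz, hzj⟩ := exists_mem_segment_apply_eq (x := xm) (y := xp) (j := j) (c := c j)
    (Icc_subset_uIcc ⟨hxm_j.trans hc.1, hc.2.trans hxp_j⟩)
  exact ⟨z, ⟨hK.segment_subset hxmK hxpK hz, hzj⟩,
    (convex_cornerRegion I S a b).segment_subset hxm_corner hxp_corner hz⟩

theorem Convex.exists_eqOn_of_forall_cornerRegion (hK : Convex ℝ K) {I : Finset ι}
    (hKI : ∀ S ⊆ I, (K ∩ cornerRegion I S a b).Nonempty)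
    (hc : ∀ i ∈ I, c i ∈ Icc (a i) (b i)) :
    ∃ x ∈ K, ∀ i ∈ I, x i = c i := by
  induction I using Finset.induction_on generalizing K with
  | empty =>
    obtain ⟨x, hx, -⟩ := hKI ∅ subset_rfl
    exact ⟨x, hx, by simp⟩
  | @insert j I hj ih =>
    have hslice : Convex ℝ (K ∩ {x | x j = c j}) :=
      hK.inter (convex_hyperplane (LinearMap.proj j : (ι → ℝ) →ₗ[ℝ] ℝ).isLinear (c j))
    obtain ⟨x, ⟨hxK, hxj⟩, hx⟩ := ih hslice
      (hK.nonempty_slice_inter_cornerRegion hj hKI (hc j (Finset.mem_insert_self j I)))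
      (fun i hi => hc i (Finset.mem_insert_of_mem hi))
    exact ⟨x, hxK, Finset.forall_mem_insert _ _ _ |>.mpr ⟨hxj, hx⟩⟩

end CornerRegion

variable {n : ℕ} {K : Set (Fin n → ℝ)} {I : Finset (Fin n)} {t : ℝ}

theorem TShattered.nonempty_inter_cornerRegion_neg_half_half (hconv : Convex ℝ K)
    (hsym : K = -K) (hI : TShattered K I t) :
    ∀ S ⊆ I, (K ∩ cornerRegion I S (fun _ => -(t / 2)) (fun _ => t / 2)).Nonempty := by
  obtain ⟨h, hh⟩ := hI
  intro S hS
  obtain ⟨x, hxK, hxS, hxI⟩ := hh S hS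
  obtain ⟨y, hyK, hyS, hyI⟩ := hh (I \ S) Finset.sdiff_subset
  rw [Finset.sdiff_sdiff_eq_self hS] at hyI
  have hyK' : -y ∈ K := by rw [hsym]; exact neg_mem_neg.mpr hyK
  refine ⟨(1 / 2 : ℝ) • x + (1 / 2 : ℝ) • -y,
    hconv hxK hyK' (by norm_num) (by norm_num) (by norm_num), fun i hi => ?_, fun i hi => ?_⟩
  · have := hxS i hi; have := hyI i hi
    simp only [Pi.add_apply, Pi.smul_apply, Pi.neg_apply, smul_eq_mul]
    linarith
  · have := hxI i hi; have := hyS i hi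
    simp only [Pi.add_apply, Pi.smul_apply, Pi.neg_apply, smul_eq_mul]
    linarith

theorem TShattered.mem_projSet (hconv : Convex ℝ K) (hsym : K = -K) (hI : TShattered K I t)
    (c : {i // i ∈ I} → ℝ) (hc : ∀ i, |c i| ≤ t / 2) : c ∈ projSet K I := by
  obtain ⟨x, hxK, hx⟩ := hconv.exists_eqOn_of_forall_cornerRegion
    (hI.nonempty_inter_cornerRegion_neg_half_half hconv hsym)
    (c := fun i => if hi : i ∈ I then c ⟨i, hi⟩ else 0)
    (fun i hi => by simpa [hi] using abs_le.mp (hc ⟨i, hi⟩))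
  exact ⟨x, hxK, fun i => by simpa using hx i i.2⟩

theorem tShattered_of_forall_mem_projSet (ht : 0 ≤ t)
    (hcube : ∀ c : {i // i ∈ I} → ℝ, (∀ i, |c i| ≤ t / 2) → c ∈ projSet K I) :
    TShattered K I t := by
  refine ⟨fun _ => -(t / 2), fun S hS => ?_⟩
  have ht2 : |t / 2| = t / 2 := abs_of_nonneg (by linarith)
  obtain ⟨x, hxK, hx⟩ := hcube (fun i => if i.1 ∈ S then t / 2 else -(t / 2))
    (fun i => by split_ifs <;> simp [ht2])
  refine ⟨x, hxK, fun i hi => ?_, fun i hi => ?_⟩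
  · have := hx ⟨i, hS hi⟩
    simp only [hi, if_true] at this
    linarith
  · have := hx ⟨i, (Finset.mem_sdiff.mp hi).1⟩
    simp only [(Finset.mem_sdiff.mp hi).2, if_false] at this
    linarith

/-- For a convex symmetric `K ⊆ ℝ^n` and `t > 0`, the combinatorial dimension
`v(K,t)` (the largest cardinality of a `t`-shattered set) coincides with the
largest cardinality of a coordinate set `I` for which `P_I K` contains the
cube `[-t/2, t/2]^I`: for every `d`, there is a `t`-shattered set of size at
least `d` iff there is a set `I` of size at least `d` with
`[-t/2,t/2]^I ⊆ P_I K`. -/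
theorem comb_dim_eq_cube_in_projection (n : ℕ) (K : Set (Fin n → ℝ))
    (hconv : Convex ℝ K) (hsym : K = -K) (t : ℝ) (ht : 0 < t) (d : ℕ) :
    (∃ I : Finset (Fin n), d ≤ I.card ∧ TShattered K I t) ↔
    (∃ I : Finset (Fin n), d ≤ I.card ∧
      ∀ c : {i // i ∈ I} → ℝ, (∀ i, |c i| ≤ t / 2) → c ∈ projSet K I) := by
  constructor
  · rintro ⟨I, hId, hI⟩
    exact ⟨I, hId, hI.mem_projSet hconv hsym⟩
  · rintro ⟨I, hId, hcube⟩
    exact ⟨I, hId, tShattered_of_forall_mem_projSet ht.le hcube⟩
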